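/- A permutation γ ∈ S_n is join-irreducible in the right weak order if and only if there exist i ∈ [n−1] such that γ_i > γ_{i+1} and γ_j < γ_{j+1} for all j ∈ [n−1] with j ≠ i. Moreover, the map sending such γ to the set A = {γ_{i+1}, …, γ_n} is a bijection between join-irreducibles of S_n and nonempty proper subsets A ⊆ [n] with max([n]−A) > min(A). -/

import Mathlib

/-- The (left) inversion set of a permutation `w ∈ S_n`: pairs `(b, a)` of values
with `b < a` appearing in the order `a … b` in the one-line notation of `w`. -/
def invSet {n : ℕ} (w : Equiv.Perm (Fin n)) : Set (Fin n × Fin n) :=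
  {p | p.1 < p.2 ∧ w⁻¹ p.2 < w⁻¹ p.1}

/-- The right weak order on `S_n`: containment of inversion sets. -/
def weakLE {n : ℕ} (u w : Equiv.Perm (Fin n)) : Prop := invSet u ⊆ invSet w

/-- Cover relation of the right weak order on `S_n`. -/
def weakCov {n : ℕ} (u w : Equiv.Perm (Fin n)) : Prop :=
  weakLE u w ∧ u ≠ w ∧ ∀ v, weakLE u v → weakLE v w → v = u ∨ v = w

/-- Join-irreducible: covers exactly one element. -/
def JoinIrr {n : ℕ} (γ : Equiv.Perm (Fin n)) : Prop := ∃! u, weakCov u γ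

/-- `γ` has a descent at position `i` (i.e. `γ_i > γ_{i+1}`). -/
def IsDescent {n : ℕ} (γ : Equiv.Perm (Fin n)) (i : Fin n) : Prop :=
  ∃ h : (i : ℕ) + 1 < n, γ ⟨(i : ℕ) + 1, h⟩ < γ i

/-- `A` is a nonempty proper subset of `[n]` with `max(Aᶜ) > min(A)`. -/
def GoodSet {n : ℕ} (A : Finset (Fin n)) : Prop :=
  A.Nonempty ∧ A ≠ Finset.univ ∧ ∃ a ∈ A, ∃ b ∈ Aᶜ, a < b

/-!
The elements covered by `γ` in the right weak order are exactly the `γ * s_i` for the descents `i`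
of `γ`. Indeed, if `u < γ` then `u⁻¹ * γ ≠ 1` has an adjacent descent `i`; there `γ` must descend
too (`invSet u ⊆ invSet γ`), and the inversion `(γ (i+1), γ i)` is missing from `u`, so
`u ≤ γ * s_i ⋖ γ`. Hence `γ` is join-irreducible iff it has exactly one descent.

A permutation whose only descent is at `i` increases on both sides of `i`, so it is determined by
`A = {γ (i+1), …, γ n}`: it lists `Aᶜ` and then `A`, each increasingly. Conversely, when some
element of `A` is below some element of `Aᶜ`, this permutation is not the identity, and each of its
descents lies at the junction of the two blocks, so it has exactly one.
-/

open Finset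

section

variable {n : ℕ}

theorem apply_lt_apply_of_forall_not_isDescent {γ : Equiv.Perm (Fin n)} {p q : Fin n}
    (hpq : p < q) (h : ∀ m, p ≤ m → m < q → ¬IsDescent γ m) : γ p < γ q := by
  obtain ⟨q, hq⟩ := q
  induction q with
  | zero => exact absurd (Fin.lt_def.1 hpq) (Nat.not_lt_zero _)
  | succ q ih =>
    set m : Fin n := ⟨q, by omega⟩
    have hm : m < ⟨q + 1, hq⟩ := Fin.mk_lt_mk.2 q.lt_succ_self
    have hpm : p ≤ m := Fin.le_def.2 (Nat.lt_succ_iff.1 hpq)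
    have hstep : γ m < γ ⟨q + 1, hq⟩ :=
      lt_of_le_of_ne (not_lt.1 fun hlt => h m hpm hm ⟨hq, hlt⟩) (γ.injective.ne hm.ne)
    rcases hpm.eq_or_lt with hpm | hpm
    · rwa [hpm]
    · exact (ih (by omega) hpm fun k hpk hkm => h k hpk (hkm.trans hm)).trans hstep

theorem exists_isDescent_of_ne_one {σ : Equiv.Perm (Fin n)} (hσ : σ ≠ 1) :
    ∃ i, IsDescent σ i := by
  by_contra! h
  refine hσ ((Equiv.Perm.monotone_iff σ).1 (StrictMono.monotone fun p q hpq => ?_))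
  exact apply_lt_apply_of_forall_not_isDescent hpq fun m _ _ => h m

theorem mem_invSet_of_isDescent {γ : Equiv.Perm (Fin n)} {i : Fin n} (h : (i : ℕ) + 1 < n)
    (hd : γ ⟨(i : ℕ) + 1, h⟩ < γ i) : (γ ⟨(i : ℕ) + 1, h⟩, γ i) ∈ invSet γ :=
  ⟨hd, by simp [Fin.lt_def]⟩

theorem exists_isDescent_not_mem_invSet {u γ : Equiv.Perm (Fin n)} (hle : weakLE u γ)
    (hne : u ≠ γ) : ∃ (i : Fin n) (h : (i : ℕ) + 1 < n),
      γ ⟨(i : ℕ) + 1, h⟩ < γ i ∧ (γ ⟨(i : ℕ) + 1, h⟩, γ i) ∉ invSet u := by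
  -- `u⁻¹ * γ` sends a position of `γ` to the position of the same entry in `u`.
  obtain ⟨i, h, hσ⟩ := exists_isDescent_of_ne_one (mt inv_mul_eq_one.1 hne)
  set i' : Fin n := ⟨(i : ℕ) + 1, h⟩
  have hii' : i < i' := Fin.mk_lt_mk.2 (Nat.lt_succ_self _)
  have hd : γ i' < γ i := by
    by_contra! hasc
    have hinv : (γ i, γ i') ∈ invSet u := ⟨lt_of_le_of_ne hasc (γ.injective.ne hii'.ne), hσ⟩
    exact absurd (hle hinv).2 (by simpa using hii'.le)
  exact ⟨i, h, hd, fun hmem => lt_asymm hσ hmem.2⟩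

theorem invSet_injective : Function.Injective (invSet (n := n)) := by
  intro u w h
  by_contra hne
  obtain ⟨i, hi, hd, hnot⟩ := exists_isDescent_not_mem_invSet h.le hne
  exact hnot (h ▸ mem_invSet_of_isDescent hi hd)

theorem invSet_mul_swap {γ : Equiv.Perm (Fin n)} {i : Fin n} (h : (i : ℕ) + 1 < n)
    (hd : γ ⟨(i : ℕ) + 1, h⟩ < γ i) :
    invSet (γ * Equiv.swap i ⟨(i : ℕ) + 1, h⟩) = invSet γ \ {(γ ⟨(i : ℕ) + 1, h⟩, γ i)} := by
  ext ⟨b, a⟩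
  obtain ⟨y, rfl⟩ := γ.surjective b
  obtain ⟨x, rfl⟩ := γ.surjective a
  simp only [invSet, Set.mem_ofPred_eq, Set.mem_sdiff, Set.mem_singleton_iff, Prod.mk.injEq,
    mul_inv_rev, Equiv.swap_inv, Equiv.Perm.mul_apply, Equiv.Perm.coe_inv, Equiv.symm_apply_apply,
    γ.injective.eq_iff, Equiv.swap_apply_def]
  rw [and_assoc]
  refine and_congr_right fun hlt => ?_
  split_ifs <;> subst_vars <;> simp only [Fin.ext_iff, Fin.lt_def] at * <;> grind

theorem weakCov_mul_swap {γ : Equiv.Perm (Fin n)} {i : Fin n} (h : (i : ℕ) + 1 < n)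
    (hd : γ ⟨(i : ℕ) + 1, h⟩ < γ i) : weakCov (γ * Equiv.swap i ⟨(i : ℕ) + 1, h⟩) γ := by
  have hpair := mem_invSet_of_isDescent h hd
  have hswap := invSet_mul_swap h hd
  have hle : weakLE (γ * Equiv.swap i ⟨(i : ℕ) + 1, h⟩) γ := by
    rw [weakLE, hswap]
    exact Set.sdiff_subset
  refine ⟨hle, fun he => ?_, fun v hlow hup => ?_⟩
  · rw [he] at hswap
    exact (hswap ▸ hpair).2 rfl
  rw [weakLE, hswap] at hlow
  by_cases hv : (γ ⟨(i : ℕ) + 1, h⟩, γ i) ∈ invSet v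
  · refine Or.inr (invSet_injective (hup.antisymm ?_))
    rwa [Set.sdiff_singleton_subset_iff, Set.insert_eq_of_mem hv] at hlow
  · refine Or.inl (invSet_injective ?_)
    exact ((Set.subset_sdiff_singleton hup hv).antisymm hlow).trans hswap.symm

theorem weakCov_iff {u γ : Equiv.Perm (Fin n)} :
    weakCov u γ ↔ ∃ (i : Fin n) (h : (i : ℕ) + 1 < n),
      γ ⟨(i : ℕ) + 1, h⟩ < γ i ∧ u = γ * Equiv.swap i ⟨(i : ℕ) + 1, h⟩ := by
  refine ⟨fun hcov => ?_, fun ⟨i, h, hd, hu⟩ => hu ▸ weakCov_mul_swap h hd⟩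
  obtain ⟨i, h, hd, hnot⟩ := exists_isDescent_not_mem_invSet hcov.1 hcov.2.1
  have hcov' := weakCov_mul_swap h hd
  have hle : weakLE u (γ * Equiv.swap i ⟨(i : ℕ) + 1, h⟩) := by
    rw [weakLE, invSet_mul_swap h hd]
    exact Set.subset_sdiff_singleton hcov.1 hnot
  exact ⟨i, h, hd, ((hcov.2.2 _ hle hcov'.1).resolve_right hcov'.2.1).symm⟩

theorem eq_of_swap_succ_eq {i j : Fin n} (hi : (i : ℕ) + 1 < n) (hj : (j : ℕ) + 1 < n)
    (he : Equiv.swap i ⟨(i : ℕ) + 1, hi⟩ = Equiv.swap j ⟨(j : ℕ) + 1, hj⟩) : i = j := by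
  have := congrArg (· i) he
  simp only [Equiv.swap_apply_left, Equiv.swap_apply_def] at this
  split_ifs at this <;> simp_all [Fin.ext_iff]; omega

theorem joinIrr_iff_existsUnique_isDescent {γ : Equiv.Perm (Fin n)} :
    JoinIrr γ ↔ ∃! i, IsDescent γ i := by
  simp only [JoinIrr, weakCov_iff]
  constructor
  · rintro ⟨_, ⟨i, h, hd, rfl⟩, huniq⟩
    refine ⟨i, ⟨h, hd⟩, fun j ⟨hj, hdj⟩ => ?_⟩
    exact eq_of_swap_succ_eq hj h (mul_left_cancel (huniq _ ⟨j, hj, hdj, rfl⟩))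
  · rintro ⟨i, ⟨h, hd⟩, huniq⟩
    refine ⟨_, ⟨i, h, hd, rfl⟩, ?_⟩
    rintro _ ⟨j, hj, hdj, rfl⟩
    obtain rfl := huniq j ⟨hj, hdj⟩
    rfl

theorem goodSet_image_Ioi_of_isDescent {γ : Equiv.Perm (Fin n)} {i : Fin n}
    (hd : IsDescent γ i) : GoodSet ((Ioi i).image γ) := by
  obtain ⟨h, hlt⟩ := hd
  have hnext : γ ⟨(i : ℕ) + 1, h⟩ ∈ (Ioi i).image γ :=
    mem_image_of_mem γ (mem_Ioi.2 (Fin.mk_lt_mk.2 (Nat.lt_succ_self _)))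
  have hi : γ i ∉ (Ioi i).image γ := by
    rw [γ.injective.mem_finset_image, mem_Ioi]
    exact lt_irrefl i
  exact ⟨⟨_, hnext⟩, fun hu => hi (hu ▸ mem_univ _), _, hnext, _, mem_compl.2 hi, hlt⟩

/- `Tuple.sort (· ∈ A)` sorts by the key `x ∈ A : Prop`, where `False < True`: it puts `Aᶜ` before
`A`, each block in increasing order. -/

theorem eq_sort_of_existsUnique_isDescent {γ : Equiv.Perm (Fin n)} {i : Fin n}
    (huniq : ∃! i, IsDescent γ i) (hi : IsDescent γ i) :
    γ = Tuple.sort (· ∈ (Ioi i).image γ) := by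
  have hmem : ∀ j, γ j ∈ (Ioi i).image γ ↔ i < j := fun j => by
    rw [γ.injective.mem_finset_image, mem_Ioi]
  refine Tuple.eq_sort_iff.2 ⟨fun j k hjk => ?_, fun j k hjk hsame => ?_⟩
  · show γ j ∈ _ → γ k ∈ _
    simp only [hmem]
    exact fun hij => hij.trans_le hjk
  · refine apply_lt_apply_of_forall_not_isDescent hjk fun m hjm hmk hm => ?_
    obtain rfl := huniq.unique hm hi
    rw [hmem, hmem, eq_iff_iff] at hsame
    exact hjm.not_gt (hsame.2 hmk)

theorem sort_mem_iff_of_isDescent {A : Finset (Fin n)} {m : Fin n}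
    (hm : IsDescent (Tuple.sort (· ∈ A)) m) (j : Fin n) :
    Tuple.sort (· ∈ A) j ∈ A ↔ m < j := by
  set σ := Tuple.sort (· ∈ A)
  obtain ⟨h, hlt⟩ := hm
  have hmono : Monotone ((· ∈ A) ∘ σ) := Tuple.monotone_sort _
  have hsucc : m < ⟨(m : ℕ) + 1, h⟩ := Fin.mk_lt_mk.2 (Nat.lt_succ_self _)
  have hdiff : ¬(σ m ∈ A ↔ σ ⟨(m : ℕ) + 1, h⟩ ∈ A) := fun hiff =>
    lt_asymm hlt ((Tuple.eq_sort_iff.1 rfl).2 _ _ hsucc (propext hiff))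
  have hout : σ m ∉ A := fun hA => hdiff ⟨fun _ => hmono hsucc.le hA, fun _ => hA⟩
  have hin : σ ⟨(m : ℕ) + 1, h⟩ ∈ A := by tauto
  exact ⟨fun hj => lt_of_not_ge fun hjm => hout (hmono hjm hj),
    fun hmj => hmono (Fin.mk_le_of_le_val hmj) hin⟩

theorem existsUnique_isDescent_sort {A : Finset (Fin n)} {a b : Fin n} (ha : a ∈ A)
    (hb : b ∉ A) (hab : a < b) : ∃! i, IsDescent (Tuple.sort (· ∈ A)) i := by
  have hne : Tuple.sort (· ∈ A) ≠ 1 := fun h1 =>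
    hb (Tuple.sort_eq_refl_iff_monotone.1 h1 hab.le ha)
  obtain ⟨i, hi⟩ := exists_isDescent_of_ne_one hne
  refine ⟨i, hi, fun j hj => Set.Ioi_inj.1 (Set.ext fun k => ?_)⟩
  exact (sort_mem_iff_of_isDescent hj k).symm.trans (sort_mem_iff_of_isDescent hi k)

theorem image_Ioi_sort_of_isDescent {A : Finset (Fin n)} {i : Fin n}
    (hi : IsDescent (Tuple.sort (· ∈ A)) i) : (Ioi i).image (Tuple.sort (· ∈ A)) = A := by
  ext x
  obtain ⟨j, rfl⟩ := (Tuple.sort (· ∈ A)).surjective x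
  rw [(Tuple.sort _).injective.mem_finset_image, mem_Ioi, sort_mem_iff_of_isDescent hi]

end

/-- A permutation `γ ∈ S_n` is join-irreducible in the right weak order
iff it has exactly one descent; moreover `γ ↦ A = {γ_{i+1}, …, γ_n}` (values after the
unique descent) is a bijection between join-irreducibles of `S_n` and nonempty proper
subsets `A ⊆ [n]` with `max(Aᶜ) > min(A)`. -/
theorem stmt_12 {n : ℕ} :
    (∀ γ : Equiv.Perm (Fin n), JoinIrr γ ↔ ∃! i : Fin n, IsDescent γ i) ∧
    (∀ γ : Equiv.Perm (Fin n), JoinIrr γ →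
      ∃ i : Fin n, IsDescent γ i ∧ GoodSet (Finset.image ⇑γ (Finset.Ioi i))) ∧
    (∀ A : Finset (Fin n), GoodSet A →
      ∃! γ : Equiv.Perm (Fin n), JoinIrr γ ∧
        ∃ i : Fin n, IsDescent γ i ∧ A = Finset.image ⇑γ (Finset.Ioi i)) := by
  refine ⟨fun γ => joinIrr_iff_existsUnique_isDescent, fun γ hγ => ?_, fun A hA => ?_⟩
  · obtain ⟨i, hi, -⟩ := joinIrr_iff_existsUnique_isDescent.1 hγ
    exact ⟨i, hi, goodSet_image_Ioi_of_isDescent hi⟩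
  · obtain ⟨-, -, a, ha, b, hb, hab⟩ := hA
    obtain ⟨i, hi, huniq⟩ := existsUnique_isDescent_sort ha (mem_compl.1 hb) hab
    refine ⟨Tuple.sort (· ∈ A), ⟨joinIrr_iff_existsUnique_isDescent.2 ⟨i, hi, huniq⟩, i, hi,
      (image_Ioi_sort_of_isDescent hi).symm⟩, ?_⟩
    rintro γ ⟨hγ, j, hj, rfl⟩
    exact eq_sort_of_existsUnique_isDescent (joinIrr_iff_existsUnique_isDescent.1 hγ) hj
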